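/- arXiv:1502.00366 — 7 statements merged into one kernel-verified Lean document; each statement's English description precedes it below -/
import Mathlib

section
/- For every positive integer n, 2·ν₂(n) = Σ_{k=1}^{n-1} d(k)·d(n−k) − σ₁(n) + d(n), where ν₂(n) is the number of partitions of n into exactly two distinct part sizes. -/
def numPartSizes {n : ℕ} (p : n.Partition) : ℕ := p.parts.toFinset.card

/-- `nu k n` is the number of partitions of `n` into exactly `k` distinct part sizes. -/
def nu (k n : ℕ) : ℕ := Finset.card (Finset.univ.filter (fun p : n.Partition => numPartSizes p = k))

/-!
Both sides count the representations `n = a * x + b * y` with `a, x, b, y` positive. Grouping them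
by `k = a * x` gives the convolution `∑ d(k) d(n - k)`. Those with `a < b` are exactly the
partitions of `n` with the two part sizes `a < b` (of multiplicities `x` and `y`), and swapping the
summands matches them with those with `a > b`. Those with `a = b` are a divisor `a` of `n` together
with a composition `x + y = n / a` into two positive parts; there are `n / a - 1` of these, in
total `σ₁(n) - d(n)`.
-/

open Finset

lemma Finset.sum_antidiagonal_eq_sum_Ico {M : Type*} [AddCommMonoid M] (f : ℕ → ℕ → M) {n : ℕ}
    (hl : f 0 n = 0) (hr : f n 0 = 0) :
    ∑ ij ∈ antidiagonal n, f ij.1 ij.2 = ∑ k ∈ Ico 1 n, f k (n - k) := by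
  rw [Nat.sum_antidiagonal_eq_sum_range_succ f n]
  refine (sum_subset (fun k hk => ?_) fun k hk hk' => ?_).symm
  · simp only [mem_Ico, Finset.mem_range] at hk ⊢
    omega
  · simp only [mem_Ico, Finset.mem_range] at hk hk'
    obtain rfl | rfl : k = 0 ∨ k = n := by omega
    · simpa using hl
    · simpa using hr

lemma Finset.card_eq_card_filter_eq_add_card_filter_lt_add_card_filter_gt {α β : Type*}
    [LinearOrder β] (s : Finset α) (f g : α → β) :
    #s = #(s.filter fun a => f a = g a) + #(s.filter fun a => f a < g a)
      + #(s.filter fun a => g a < f a) := by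
  classical
  rw [← card_union_of_disjoint (disjoint_filter.2 fun _ _ h h' => h'.ne h), ← filter_or,
    ← card_union_of_disjoint (disjoint_filter.2 fun _ _ h h' => by rcases h with h | h <;> order),
    ← filter_or, filter_true_of_mem fun a _ => by order]

lemma Finset.eq_and_eq_of_pair_eq_pair {α : Type*} [LinearOrder α] {a b c d : α} (hab : a < b)
    (hcd : c < d) (h : ({a, b} : Finset α) = {c, d}) : a = c ∧ b = d := by
  have ha : a ∈ ({c, d} : Finset α) := h ▸ mem_insert_self a {b}
  have hb : b ∈ ({c, d} : Finset α) := h ▸ mem_insert_of_mem (mem_singleton_self b)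
  have hc : c ∈ ({a, b} : Finset α) := h.symm ▸ mem_insert_self c {d}
  simp only [mem_insert, mem_singleton] at ha hb hc
  rcases ha with ha | ha <;> rcases hb with hb | hb <;> rcases hc with hc | hc <;>
    constructor <;> order

lemma Nat.card_divisorsAntidiagonal (n : ℕ) : #n.divisorsAntidiagonal = #n.divisors := by
  rw [← Nat.map_div_right_divisors, Finset.card_map]

lemma Multiset.eq_replicate_count_add_replicate_count {α : Type*} [DecidableEq α]
    {s : Multiset α} {a b : α} (hab : a ≠ b) (h : s.toFinset = {a, b}) :
    s = replicate (s.count a) a + replicate (s.count b) b := by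
  conv_lhs => rw [← toFinset_sum_count_nsmul_eq s]
  rw [h, Finset.sum_pair hab, nsmul_singleton, nsmul_singleton]

lemma Multiset.toFinset_replicate_add_replicate {α : Type*} [DecidableEq α] {x y : ℕ} (a b : α)
    (hx : x ≠ 0) (hy : y ≠ 0) : (replicate x a + replicate y b).toFinset = {a, b} := by
  simp [toFinset_add, hx, hy]

def Nat.Partition.ofReplicateAdd {n a x b y : ℕ} (ha : a ≠ 0) (hb : b ≠ 0)
    (h : a * x + b * y = n) : n.Partition where
  parts := Multiset.replicate x a + Multiset.replicate y b
  parts_pos hi := by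
    rcases Multiset.mem_add.1 hi with hi | hi <;> rw [Multiset.eq_of_mem_replicate hi] <;>
      positivity
  parts_sum := by simp [mul_comm, h]

/-- The representations `n = a * x + b * y` with `a, x, b, y` positive, as `((a, x), (b, y))`. -/
def mulAddReps (n : ℕ) : Finset ((ℕ × ℕ) × ℕ × ℕ) :=
  (antidiagonal n).biUnion fun ij => ij.1.divisorsAntidiagonal ×ˢ ij.2.divisorsAntidiagonal

lemma mem_mulAddReps {n a x b y : ℕ} :
    ((a, x), (b, y)) ∈ mulAddReps n ↔ a * x + b * y = n ∧ a ≠ 0 ∧ x ≠ 0 ∧ b ≠ 0 ∧ y ≠ 0 := by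
  simp [mulAddReps, Nat.mem_divisorsAntidiagonal, and_assoc]

lemma card_mulAddReps (n : ℕ) :
    #(mulAddReps n) = ∑ k ∈ Ico 1 n, #k.divisors * #(n - k).divisors := by
  rw [mulAddReps, card_biUnion]
  · simp only [card_product, Nat.card_divisorsAntidiagonal]
    exact sum_antidiagonal_eq_sum_Ico (fun i j => #i.divisors * #j.divisors) (by simp) (by simp)
  · intro ij _ ij' _ hne
    refine disjoint_left.2 fun q hq hq' => hne ?_
    simp only [mem_product, Nat.mem_divisorsAntidiagonal] at hq hq'
    exact Prod.ext (hq.1.1.symm.trans hq'.1.1) (hq.2.1.symm.trans hq'.2.1)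

lemma card_filter_fst_eq_snd_mulAddReps_add_card_divisors (n : ℕ) :
    #((mulAddReps n).filter fun q => q.1.1 = q.2.1) + #n.divisors = ∑ d ∈ n.divisors, d := by
  have hfibers : #((mulAddReps n).filter fun q => q.1.1 = q.2.1) =
      ∑ cm ∈ n.divisorsAntidiagonal, (cm.2 - 1) := by
    rw [card_eq_sum_card_fiberwise (f := fun q => (q.1.1, q.1.2 + q.2.2))]
    · refine sum_congr rfl fun ⟨c, m⟩ hcm => ?_
      have hc := Nat.left_ne_zero_of_mem_divisorsAntidiagonal hcm
      calc _ = #(Ioo 0 m) := by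
            refine card_nbij' (fun q => q.1.2) (fun x => ((c, x), (c, m - x))) ?_ ?_ ?_
              (fun _ _ => rfl)
            · rintro ⟨⟨a, x⟩, b, y⟩
              simp only [coe_filter, mem_filter, Set.mem_ofPred_eq, mem_mulAddReps, Prod.mk.injEq,
                coe_Ioo, Set.mem_Ioo, and_imp]
              omega
            · intro x hx
              simp only [coe_Ioo, Set.mem_Ioo] at hx
              have hsum : c * x + c * (m - x) = n := by
                rw [← mul_add, Nat.add_sub_cancel' hx.2.le, (Nat.mem_divisorsAntidiagonal.1 hcm).1]
              simp only [coe_filter, mem_filter, Set.mem_ofPred_eq, mem_mulAddReps, Prod.mk.injEq,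
                hsum, hc, ne_eq, not_false_eq_true, true_and, and_true]
              omega
            · rintro ⟨⟨a, x⟩, b, y⟩
              simp only [coe_filter, mem_filter, Set.mem_ofPred_eq, mem_mulAddReps, Prod.mk.injEq,
                and_true, and_imp]
              omega
        _ = m - 1 := by simp
    · rintro ⟨⟨a, x⟩, b, y⟩
      simp only [coe_filter, Set.mem_ofPred_eq, mem_mulAddReps]
      rintro ⟨⟨rfl, ha, hx, -, hy⟩, rfl⟩
      rw [mem_coe, Nat.mem_divisorsAntidiagonal, mul_add]
      exact ⟨rfl, by positivity⟩
  rw [hfibers, ← Nat.card_divisorsAntidiagonal, card_eq_sum_ones, ← sum_add_distrib,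
    ← Nat.sum_divisorsAntidiagonal' fun _ m => m]
  exact sum_congr rfl fun cm hcm => Nat.sub_add_cancel <|
    Nat.one_le_iff_ne_zero.2 (Nat.right_ne_zero_of_mem_divisorsAntidiagonal hcm)

lemma card_filter_snd_lt_fst_mulAddReps (n : ℕ) :
    #((mulAddReps n).filter fun q => q.2.1 < q.1.1) =
      #((mulAddReps n).filter fun q => q.1.1 < q.2.1) := by
  refine card_nbij' Prod.swap Prod.swap ?_ ?_ (fun _ _ => rfl) (fun _ _ => rfl) <;>
  · rintro ⟨⟨a, x⟩, b, y⟩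
    simp only [coe_filter, Set.mem_ofPred_eq, Prod.swap_prod_mk, mem_mulAddReps]
    omega

lemma card_filter_fst_lt_snd_mulAddReps (n : ℕ) :
    #((mulAddReps n).filter fun q => q.1.1 < q.2.1) = nu 2 n := by
  rw [nu]
  refine card_bij (fun q hq => Nat.Partition.ofReplicateAdd
    (mem_mulAddReps.1 (mem_filter.1 hq).1).2.1 (mem_mulAddReps.1 (mem_filter.1 hq).1).2.2.2.1
    (mem_mulAddReps.1 (mem_filter.1 hq).1).1) ?_ ?_ ?_
  · rintro ⟨⟨a, x⟩, b, y⟩ hq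
    simp only [mem_filter, mem_mulAddReps] at hq
    rw [mem_filter_univ, numPartSizes, Nat.Partition.ofReplicateAdd,
      Multiset.toFinset_replicate_add_replicate a b hq.1.2.2.1 hq.1.2.2.2.2, card_pair hq.2.ne]
  · rintro ⟨⟨a, x⟩, b, y⟩ hq ⟨⟨a', x'⟩, b', y'⟩ hq' h
    simp only [mem_filter, mem_mulAddReps] at hq hq'
    have hparts := congrArg Nat.Partition.parts h
    simp only [Nat.Partition.ofReplicateAdd] at hparts
    have hsizes := congrArg Multiset.toFinset hparts
    rw [Multiset.toFinset_replicate_add_replicate a b hq.1.2.2.1 hq.1.2.2.2.2,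
      Multiset.toFinset_replicate_add_replicate a' b' hq'.1.2.2.1 hq'.1.2.2.2.2] at hsizes
    obtain ⟨rfl, rfl⟩ := eq_and_eq_of_pair_eq_pair hq.2 hq'.2 hsizes
    have hx := congrArg (Multiset.count a) hparts
    have hy := congrArg (Multiset.count b) hparts
    simp only [Multiset.count_add, Multiset.count_replicate_self, Multiset.count_replicate,
      hq.2.ne, hq.2.ne', if_false, add_zero, zero_add] at hx hy
    rw [hx, hy]
  · intro p hp
    rw [mem_filter_univ, numPartSizes] at hp
    obtain ⟨a, b, hab, hsizes⟩ : ∃ a b, a < b ∧ p.parts.toFinset = {a, b} := by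
      obtain ⟨a, b, hne, hsizes⟩ := card_eq_two.1 hp
      rcases hne.lt_or_gt with hab | hab
      · exact ⟨a, b, hab, hsizes⟩
      · exact ⟨b, a, hab, pair_comm a b ▸ hsizes⟩
    have hdecomp := Multiset.eq_replicate_count_add_replicate_count hab.ne hsizes
    have ha : a ∈ p.parts := by simp [← Multiset.mem_toFinset, hsizes]
    have hb : b ∈ p.parts := by simp [← Multiset.mem_toFinset, hsizes]
    refine ⟨((a, p.parts.count a), (b, p.parts.count b)), ?_, Nat.Partition.ext hdecomp.symm⟩
    simp only [mem_filter, mem_mulAddReps]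
    refine ⟨⟨?_, (p.parts_pos ha).ne', Multiset.count_ne_zero.2 ha, (p.parts_pos hb).ne',
      Multiset.count_ne_zero.2 hb⟩, hab⟩
    have hsum := p.parts_sum
    rw [hdecomp] at hsum
    simpa [mul_comm] using hsum

theorem two_nu_two_eq_general (n : ℕ) :
    (2 * nu 2 n : ℤ) =
      (∑ k ∈ Finset.Ico 1 n, (k.divisors.card * (n - k).divisors.card : ℤ))
        - (ArithmeticFunction.sigma 1 n : ℤ) + (n.divisors.card : ℤ) := by
  have hcount : ∑ k ∈ Ico 1 n, #k.divisors * #(n - k).divisors + #n.divisors =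
      2 * nu 2 n + ArithmeticFunction.sigma 1 n := by
    rw [← card_mulAddReps, card_eq_card_filter_eq_add_card_filter_lt_add_card_filter_gt _
        (fun q => q.1.1) (fun q => q.2.1), card_filter_snd_lt_fst_mulAddReps,
      card_filter_fst_lt_snd_mulAddReps, ArithmeticFunction.sigma_one_apply,
      ← card_filter_fst_eq_snd_mulAddReps_add_card_divisors]
    ring
  have hcount_int := congrArg (Nat.cast : ℕ → ℤ) hcount
  push_cast at hcount_int
  linarith

theorem two_nu_two_eq (n : ℕ) (hn : 0 < n) :
    (2 * nu 2 n : ℤ) =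
      (∑ k ∈ Finset.Ico 1 n, (k.divisors.card * (n - k).divisors.card : ℤ))
        - (ArithmeticFunction.sigma 1 n : ℤ) + (n.divisors.card : ℤ) :=
  two_nu_two_eq_general n
end

section
/- If n ≡ 2 (mod 4), then ν₂(n) is even. -/
open Multiset

theorem Finset.two_dvd_card_of_involution {ι : Type*} (s : Finset ι) (g : ι → ι)
    (g_mem : ∀ a ∈ s, g a ∈ s) (g_inv : ∀ a ∈ s, g (g a) = a) (g_ne : ∀ a ∈ s, g a ≠ a) :
    2 ∣ s.card := by
  rw [← ZMod.natCast_eq_zero_iff, Finset.card_eq_sum_ones, Nat.cast_sum, Nat.cast_one]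
  exact Finset.sum_involution (fun a _ => g a) (fun _ _ => by decide)
    (fun a ha _ => g_ne a ha) g_mem g_inv

def replicatePair {α : Type*} (a b : α) (i j : ℕ) : Multiset α := replicate i a + replicate j b

theorem count_replicatePair_left {α : Type*} [DecidableEq α] {a b : α} (i j : ℕ) (hab : a ≠ b) :
    (replicatePair a b i j).count a = i := by
  simp [replicatePair, count_replicate, hab.symm]

theorem count_replicatePair_right {α : Type*} [DecidableEq α] {a b : α} (i j : ℕ) (hab : a ≠ b) :
    (replicatePair a b i j).count b = j := by
  simp [replicatePair, count_replicate, hab]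

theorem mem_replicatePair {α : Type*} {a b x : α} {i j : ℕ} (hi : i ≠ 0) (hj : j ≠ 0) :
    x ∈ replicatePair a b i j ↔ x = a ∨ x = b := by
  simp [replicatePair, mem_replicate, hi, hj]

theorem toFinset_replicatePair {α : Type*} [DecidableEq α] {a b : α} {i j : ℕ} (hi : i ≠ 0)
    (hj : j ≠ 0) :
    (replicatePair a b i j).toFinset = {a, b} := by
  simp [replicatePair, toFinset_add, toFinset_replicate, hi, hj]

theorem sum_replicatePair (a b i j : ℕ) : (replicatePair a b i j).sum = a * i + b * j := by
  simp [replicatePair, sum_replicate, mul_comm]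

theorem exists_eq_replicatePair_of_card_toFinset_eq_two {β : Type*} [LinearOrder β]
    {s : Multiset β} (hs : s.toFinset.card = 2) :
    ∃ a b i j, b < a ∧ i ≠ 0 ∧ j ≠ 0 ∧ s = replicatePair a b i j := by
  obtain ⟨a, b, hba, hab⟩ : ∃ a b, b < a ∧ s.toFinset = {a, b} := by
    obtain ⟨x, y, hxy, hxy_eq⟩ := Finset.card_eq_two.mp hs
    rcases hxy.lt_or_gt with h | h
    · exact ⟨y, x, h, by rw [hxy_eq, Finset.pair_comm]⟩
    · exact ⟨x, y, h, hxy_eq⟩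
  have hcount (x : β) (hx : x ∈ s.toFinset) : s.count x ≠ 0 :=
    (count_pos.mpr (mem_toFinset.mp hx)).ne'
  refine ⟨a, b, s.count a, s.count b, hba, hcount a (by simp [hab]), hcount b (by simp [hab]), ?_⟩
  have hsum := toFinset_sum_count_nsmul_eq s
  rw [hab, Finset.sum_pair hba.ne', nsmul_singleton, nsmul_singleton] at hsum
  exact hsum.symm

theorem replicatePair_inj {β : Type*} [LinearOrder β] {a b a' b' : β} {i j i' j' : ℕ}
    (hba : b < a) (hi : i ≠ 0) (hj : j ≠ 0) (hba' : b' < a') (hi' : i' ≠ 0) (hj' : j' ≠ 0)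
    (h : replicatePair a b i j = replicatePair a' b' i' j') : (a, b, i, j) = (a', b', i', j') := by
  obtain ⟨rfl, rfl⟩ : a = a' ∧ b = b' := by
    have hmem (x : β) : x = a ∨ x = b ↔ x = a' ∨ x = b' := by
      rw [← mem_replicatePair hi hj, ← mem_replicatePair hi' hj', h]
    have := hmem a
    have := hmem b
    have := hmem a'
    grind
  have hi_eq := congrArg (count a) h
  have hj_eq := congrArg (count b) h
  rw [count_replicatePair_left _ _ hba.ne', count_replicatePair_left _ _ hba.ne'] at hi_eq
  rw [count_replicatePair_right _ _ hba.ne', count_replicatePair_right _ _ hba.ne'] at hj_eq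
  rw [hi_eq, hj_eq]

/-- `(a, b, i, j)` encodes the partition `a^i b^j` of `n`. -/
def twoSizeTuples (n : ℕ) : Finset (ℕ × ℕ × ℕ × ℕ) :=
  (Finset.range (n + 1) ×ˢ Finset.range (n + 1) ×ˢ Finset.range (n + 1) ×ˢ
      Finset.range (n + 1)).filter
    fun ⟨a, b, i, j⟩ => b < a ∧ 0 < b ∧ 0 < i ∧ 0 < j ∧ a * i + b * j = n

theorem mem_twoSizeTuples {n a b i j : ℕ} :
    (a, b, i, j) ∈ twoSizeTuples n ↔ b < a ∧ 0 < b ∧ 0 < i ∧ 0 < j ∧ a * i + b * j = n := by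
  simp only [twoSizeTuples, Finset.mem_filter, Finset.mem_product, Finset.mem_range,
    and_iff_right_iff_imp]
  rintro ⟨hba, hb, hi, hj, rfl⟩
  refine ⟨?_, ?_, ?_, ?_⟩ <;> nlinarith

def partitionOfTwoSizeTuple (n : ℕ) :
    (q : ℕ × ℕ × ℕ × ℕ) → q ∈ twoSizeTuples n → n.Partition
  | (a, b, i, j), hq =>
    have hq := mem_twoSizeTuples.mp hq
    { parts := replicatePair a b i j
      parts_pos := fun hx => by
        rcases (mem_replicatePair hq.2.2.1.ne' hq.2.2.2.1.ne').mp hx with rfl | rfl <;> omega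
      parts_sum := (sum_replicatePair a b i j).trans hq.2.2.2.2 }

theorem nu_two_eq_card_twoSizeTuples (n : ℕ) : nu 2 n = (twoSizeTuples n).card := by
  symm
  apply Finset.card_bij (partitionOfTwoSizeTuple n)
  · rintro ⟨a, b, i, j⟩ hq
    obtain ⟨hba, -, hi, hj, -⟩ := mem_twoSizeTuples.mp hq
    refine Finset.mem_filter.mpr ⟨Finset.mem_univ _, ?_⟩
    change (replicatePair a b i j).toFinset.card = 2
    rw [toFinset_replicatePair hi.ne' hj.ne', Finset.card_pair hba.ne']
  · rintro ⟨a, b, i, j⟩ hq ⟨a', b', i', j'⟩ hq' h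
    obtain ⟨hba, -, hi, hj, -⟩ := mem_twoSizeTuples.mp hq
    obtain ⟨hba', -, hi', hj', -⟩ := mem_twoSizeTuples.mp hq'
    exact replicatePair_inj hba hi.ne' hj.ne' hba' hi'.ne' hj'.ne' (congrArg Nat.Partition.parts h)
  · intro p hp
    obtain ⟨a, b, i, j, hba, hi, hj, hp_eq⟩ :=
      exists_eq_replicatePair_of_card_toFinset_eq_two (Finset.mem_filter.mp hp).2
    have hb : 0 < b := p.parts_pos (hp_eq ▸ (mem_replicatePair hi hj).mpr (Or.inr rfl))
    have hsum : a * i + b * j = n := by rw [← p.parts_sum, hp_eq, sum_replicatePair]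
    exact ⟨(a, b, i, j), mem_twoSizeTuples.mpr ⟨hba, hb, by omega, by omega, hsum⟩,
      Nat.Partition.ext hp_eq.symm⟩

/-- Ferrers-diagram conjugation: for `a > b` the conjugate of `a^i b^j` is `(i+j)^b i^(a-b)`. -/
def conjTwoSizeTuple : ℕ × ℕ × ℕ × ℕ → ℕ × ℕ × ℕ × ℕ
  | (a, b, i, j) => (i + j, i, b, a - b)

theorem conjTwoSizeTuple_mem {n : ℕ} {q : ℕ × ℕ × ℕ × ℕ} (hq : q ∈ twoSizeTuples n) :
    conjTwoSizeTuple q ∈ twoSizeTuples n := by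
  obtain ⟨a, b, i, j⟩ := q
  obtain ⟨hba, hb, hi, hj, hsum⟩ := mem_twoSizeTuples.mp hq
  obtain ⟨c, rfl⟩ := Nat.exists_eq_add_of_lt hba
  refine mem_twoSizeTuples.mpr ⟨by omega, hi, hb, by omega, ?_⟩
  rw [← hsum, show b + c + 1 - b = c + 1 by omega]
  ring

theorem conjTwoSizeTuple_conjTwoSizeTuple {n : ℕ} {q : ℕ × ℕ × ℕ × ℕ}
    (hq : q ∈ twoSizeTuples n) : conjTwoSizeTuple (conjTwoSizeTuple q) = q := by
  obtain ⟨a, b, i, j⟩ := q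
  obtain ⟨hba, -, -, -, -⟩ := mem_twoSizeTuples.mp hq
  simp only [conjTwoSizeTuple, Prod.mk.injEq]
  exact ⟨by omega, trivial, trivial, by omega⟩

theorem exists_eq_mul_of_conjTwoSizeTuple_eq_self {n : ℕ} {q : ℕ × ℕ × ℕ × ℕ}
    (hq : q ∈ twoSizeTuples n) (hfix : conjTwoSizeTuple q = q) : ∃ i j, n = i * (i + 2 * j) := by
  obtain ⟨a, b, i, j⟩ := q
  obtain ⟨-, -, -, -, hsum⟩ := mem_twoSizeTuples.mp hq
  simp only [conjTwoSizeTuple, Prod.mk.injEq] at hfix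
  obtain ⟨rfl, rfl, -, -⟩ := hfix
  exact ⟨i, j, by rw [← hsum]; ring⟩

theorem mul_add_two_mul_mod_four_ne_two (i j : ℕ) : i * (i + 2 * j) % 4 ≠ 2 := by
  obtain ⟨m, rfl | rfl⟩ := Nat.even_or_odd' i
  · have : 2 * m * (2 * m + 2 * j) = 4 * (m * (m + j)) := by ring
    omega
  · have : (2 * m + 1) * (2 * m + 1 + 2 * j) = 2 * (2 * m * m + 2 * m + 2 * m * j + j) + 1 := by
      ring
    omega

theorem nu_two_even_of_two_mod_four (n : ℕ) (hn : n % 4 = 2) :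
    2 ∣ nu 2 n := by
  rw [nu_two_eq_card_twoSizeTuples]
  refine Finset.two_dvd_card_of_involution _ conjTwoSizeTuple (fun _ => conjTwoSizeTuple_mem)
    (fun _ => conjTwoSizeTuple_conjTwoSizeTuple) fun q hq hfix => ?_
  obtain ⟨i, j, rfl⟩ := exists_eq_mul_of_conjTwoSizeTuple_eq_self hq hfix
  exact mul_add_two_mul_mod_four_ne_two i j hn
end

section
/- If the prime factorization of n contains two or more primes appearing to odd exponent, then ν₂(n) is even. -/
theorem Finset.even_card_of_involution {α : Type*} {s : Finset α} (g : α → α)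
    (hg_mem : ∀ a ∈ s, g a ∈ s) (hg_inv : ∀ a ∈ s, g (g a) = a)
    (hg_ne : ∀ a ∈ s, g a ≠ a) :
    Even s.card := by
  have h : ∑ _a ∈ s, (1 : ZMod 2) = 0 :=
    Finset.sum_involution (fun a _ => g a) (fun _ _ => by decide) (fun a ha _ => hg_ne a ha)
      hg_mem hg_inv
  rwa [Finset.sum_const, nsmul_one, ZMod.natCast_eq_zero_iff_even] at h

theorem Finset.even_card_iff_even_card_filter_fixed {α : Type*} [DecidableEq α] {s : Finset α}
    (g : α → α) (hg_mem : ∀ a ∈ s, g a ∈ s) (hg_inv : ∀ a ∈ s, g (g a) = a) :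
    Even s.card ↔ Even (s.filter fun a => g a = a).card := by
  have hmoved : Even (s.filter fun a => g a ≠ a).card := by
    refine even_card_of_involution g (fun a ha => ?_) (fun a ha => hg_inv a (mem_filter.1 ha).1)
      (fun a ha => (mem_filter.1 ha).2)
    obtain ⟨has, hne⟩ := mem_filter.1 ha
    exact mem_filter.2 ⟨hg_mem a has, by rw [hg_inv a has]; exact hne.symm⟩
  rw [← Finset.card_filter_add_card_filter_not (fun a => g a = a)]
  simp only [Nat.even_add, hmoved, iff_true]

/-- For `d * c = n` and `v = n.factorization p`, this moves the `p`-part of `c` onto `d`. -/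
def flipOrdProj (p v d : ℕ) : ℕ := ordCompl[p] d * p ^ (v - d.factorization p)

section flipOrdProj

variable {p v d : ℕ}

theorem factorization_flipOrdProj (hp : p.Prime) (hd : d ≠ 0) :
    (flipOrdProj p v d).factorization =
      d.factorization.erase p + Finsupp.single p (v - d.factorization p) := by
  rw [flipOrdProj, Nat.factorization_mul (Nat.ordCompl_pos p hd).ne' (pow_ne_zero _ hp.ne_zero),
    Nat.factorization_ordCompl, hp.factorization_pow]

theorem factorization_flipOrdProj_self (hp : p.Prime) (hd : d ≠ 0) :
    (flipOrdProj p v d).factorization p = v - d.factorization p := by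
  simp [factorization_flipOrdProj hp hd]

theorem factorization_flipOrdProj_of_ne (hp : p.Prime) (hd : d ≠ 0) {q : ℕ} (hq : q ≠ p) :
    (flipOrdProj p v d).factorization q = d.factorization q := by
  simp [factorization_flipOrdProj hp hd, Finsupp.erase_ne hq, hq.symm]

theorem flipOrdProj_ne_zero (hp : p.Prime) (hd : d ≠ 0) : flipOrdProj p v d ≠ 0 :=
  mul_ne_zero (Nat.ordCompl_pos p hd).ne' (pow_ne_zero _ hp.ne_zero)

theorem flipOrdProj_flipOrdProj (hp : p.Prime) (hd : d ≠ 0) (hdv : d.factorization p ≤ v) :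
    flipOrdProj p v (flipOrdProj p v d) = d := by
  have hd' := flipOrdProj_ne_zero (v := v) hp hd
  refine Nat.eq_of_factorization_eq (flipOrdProj_ne_zero hp hd') hd fun q => ?_
  rcases eq_or_ne q p with rfl | hq
  · rw [factorization_flipOrdProj_self hp hd', factorization_flipOrdProj_self hp hd]
    omega
  · rw [factorization_flipOrdProj_of_ne hp hd' hq, factorization_flipOrdProj_of_ne hp hd hq]

theorem flipOrdProj_flipOrdProj_of_dvd (hp : p.Prime) {n : ℕ} (hn : n ≠ 0) (hd : d ∣ n) :
    flipOrdProj p (n.factorization p) (flipOrdProj p (n.factorization p) d) = d :=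
  have hd0 := ne_zero_of_dvd_ne_zero hn hd
  flipOrdProj_flipOrdProj hp hd0 ((Nat.factorization_le_iff_dvd hd0 hn).2 hd p)

theorem flipOrdProj_mul_flipOrdProj (hp : p.Prime) {b c : ℕ} (hb : b ≠ 0) (hc : c ≠ 0)
    (hv : (b * c).factorization p = v) :
    flipOrdProj p v b * flipOrdProj p v c = b * c := by
  have hb' := flipOrdProj_ne_zero (v := v) hp hb
  have hc' := flipOrdProj_ne_zero (v := v) hp hc
  rw [Nat.factorization_mul hb hc] at hv
  refine Nat.eq_of_factorization_eq (mul_ne_zero hb' hc') (mul_ne_zero hb hc) fun q => ?_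
  rw [Nat.factorization_mul hb' hc', Nat.factorization_mul hb hc, Finsupp.add_apply,
    Finsupp.add_apply]
  rcases eq_or_ne q p with rfl | hq
  · rw [factorization_flipOrdProj_self hp hb, factorization_flipOrdProj_self hp hc]
    rw [Finsupp.add_apply] at hv
    omega
  · rw [factorization_flipOrdProj_of_ne hp hb hq, factorization_flipOrdProj_of_ne hp hc hq]

theorem flipOrdProj_modEq {m : ℕ} (hpm : p ≡ 1 [MOD m]) : flipOrdProj p v d ≡ d [MOD m] :=
  calc flipOrdProj p v d ≡ ordCompl[p] d * 1 ^ (v - d.factorization p) [MOD m] :=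
        (hpm.pow _).mul_left _
    _ = ordCompl[p] d * 1 ^ d.factorization p := by simp only [one_pow]
    _ ≡ ordCompl[p] d * p ^ d.factorization p [MOD m] := ((hpm.pow _).mul_left _).symm
    _ = d := by rw [mul_comm, Nat.ordProj_mul_ordCompl_eq_self]

end flipOrdProj

def equalParityFactorizations (n : ℕ) : Finset (Sym2 ℕ) :=
  (n.divisorsAntidiagonal.filter fun x => x.1 < x.2 ∧ x.1 ≡ x.2 [MOD 2]).image
    fun x => s(x.1, x.2)

section equalParityFactorizations

variable {n p : ℕ}

theorem mem_equalParityFactorizations {z : Sym2 ℕ} :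
    z ∈ equalParityFactorizations n ↔
      ∃ b c, b * c = n ∧ n ≠ 0 ∧ b < c ∧ b ≡ c [MOD 2] ∧ s(b, c) = z := by
  simp only [equalParityFactorizations, Finset.mem_image, Finset.mem_filter,
    Nat.mem_divisorsAntidiagonal, Prod.exists, and_assoc]

theorem map_flipOrdProj_mem_equalParityFactorizations (hp : p.Prime) (hp_odd : Odd p)
    {z : Sym2 ℕ} (hz : z ∈ equalParityFactorizations n) :
    z.map (flipOrdProj p (n.factorization p)) ∈ equalParityFactorizations n := by
  obtain ⟨b, c, rfl, hn, hbc, hmod, rfl⟩ := mem_equalParityFactorizations.1 hz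
  obtain ⟨hb, hc⟩ := mul_ne_zero_iff.1 hn
  set f := flipOrdProj p ((b * c).factorization p)
  have hmul : f b * f c = b * c := flipOrdProj_mul_flipOrdProj hp hb hc rfl
  have hp1 : p ≡ 1 [MOD 2] := Nat.odd_iff.1 hp_odd
  have hmod' : f b ≡ f c [MOD 2] :=
    (flipOrdProj_modEq hp1).trans (hmod.trans (flipOrdProj_modEq hp1).symm)
  have hne : f b ≠ f c := fun h => hbc.ne <|
    calc b = f (f b) := (flipOrdProj_flipOrdProj_of_dvd hp hn (dvd_mul_right b c)).symm
      _ = f (f c) := congrArg f h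
      _ = c := flipOrdProj_flipOrdProj_of_dvd hp hn (dvd_mul_left c b)
  rw [Sym2.map_mk]
  rcases hne.lt_or_gt with hlt | hlt
  · exact mem_equalParityFactorizations.2 ⟨_, _, hmul, hn, hlt, hmod', rfl⟩
  · exact mem_equalParityFactorizations.2
      ⟨_, _, by rw [mul_comm, hmul], hn, hlt, hmod'.symm, Sym2.eq_swap⟩

theorem map_flipOrdProj_map_flipOrdProj (hp : p.Prime) {z : Sym2 ℕ}
    (hz : z ∈ equalParityFactorizations n) :
    (z.map (flipOrdProj p (n.factorization p))).map (flipOrdProj p (n.factorization p)) = z := by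
  obtain ⟨b, c, rfl, hn, -, -, rfl⟩ := mem_equalParityFactorizations.1 hz
  rw [Sym2.map_mk, Sym2.map_mk, flipOrdProj_flipOrdProj_of_dvd hp hn (dvd_mul_right b c),
    flipOrdProj_flipOrdProj_of_dvd hp hn (dvd_mul_left c b)]

theorem map_flipOrdProj_ne (hp : p.Prime) (hvp : Odd (n.factorization p)) {q : ℕ} (hqp : q ≠ p)
    (hvq : Odd (n.factorization q)) {z : Sym2 ℕ} (hz : z ∈ equalParityFactorizations n) :
    z.map (flipOrdProj p (n.factorization p)) ≠ z := by
  obtain ⟨b, c, rfl, hn, -, -, rfl⟩ := mem_equalParityFactorizations.1 hz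
  obtain ⟨hb, hc⟩ := mul_ne_zero_iff.1 hn
  rw [Nat.factorization_mul hb hc, Finsupp.add_apply] at hvq
  rw [Sym2.map_mk, Ne, Sym2.eq_iff]
  rintro (⟨hfb, -⟩ | ⟨hfb, -⟩)
  · have := factorization_flipOrdProj_self (v := (b * c).factorization p) hp hb
    rw [hfb] at this
    rw [Nat.factorization_mul hb hc, Finsupp.add_apply] at this hvp
    grind
  · have := factorization_flipOrdProj_of_ne (v := (b * c).factorization p) hp hb hqp
    rw [hfb] at this
    grind

theorem even_card_equalParityFactorizations (hp : p.Prime) (hp_odd : Odd p)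
    (hvp : Odd (n.factorization p)) {q : ℕ} (hqp : q ≠ p) (hvq : Odd (n.factorization q)) :
    Even (equalParityFactorizations n).card :=
  Finset.even_card_of_involution _
    (fun _ => map_flipOrdProj_mem_equalParityFactorizations hp hp_odd)
    (fun _ => map_flipOrdProj_map_flipOrdProj hp) (fun _ => map_flipOrdProj_ne hp hvp hqp hvq)

end equalParityFactorizations

/-- `(a, b, i, j)` stands for the partition `a^i b^j`, with `a > b`. -/
def twoSizeShapes (n : ℕ) : Finset (ℕ × ℕ × ℕ × ℕ) :=
  (Finset.range (n + 1) ×ˢ Finset.range (n + 1) ×ˢ Finset.range (n + 1) ×ˢ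
      Finset.range (n + 1)).filter fun x =>
    0 < x.2.1 ∧ x.2.1 < x.1 ∧ 0 < x.2.2.1 ∧ 0 < x.2.2.2 ∧
      x.2.2.1 * x.1 + x.2.2.2 * x.2.1 = n

section twoSizeShapes

variable {n a b i j : ℕ}

theorem mem_twoSizeShapes :
    (a, b, i, j) ∈ twoSizeShapes n ↔
      0 < b ∧ b < a ∧ 0 < i ∧ 0 < j ∧ i * a + j * b = n := by
  simp only [twoSizeShapes, Finset.mem_filter, Finset.mem_product, Finset.mem_range,
    and_iff_right_iff_imp]
  rintro ⟨hb, hba, hi, hj, rfl⟩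
  refine ⟨?_, ?_, ?_, ?_⟩ <;> nlinarith

theorem replicate_add_replicate_inj {a' b' i' j' : ℕ} (hba : b < a) (hb'a' : b' < a')
    (hi : 0 < i) (hj : 0 < j) (hi' : 0 < i') (hj' : 0 < j')
    (h : Multiset.replicate i a + Multiset.replicate j b =
      Multiset.replicate i' a' + Multiset.replicate j' b') :
    a = a' ∧ b = b' ∧ i = i' ∧ j = j' := by
  have hmem : ∀ x, (x = a ∨ x = b) ↔ (x = a' ∨ x = b') := fun x => by
    simpa [Multiset.mem_replicate, hi.ne', hj.ne', hi'.ne', hj'.ne'] using congrArg (x ∈ ·) h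
  obtain ⟨rfl, rfl⟩ : a = a' ∧ b = b' := by
    have := hmem a; have := hmem b; have := hmem a'; omega
  have hca := congrArg (Multiset.count a) h
  have hcb := congrArg (Multiset.count b) h
  simp only [Multiset.count_add, Multiset.count_replicate_self, Multiset.count_replicate, hba.ne,
    hba.ne', if_false, add_zero, zero_add] at hca hcb
  omega

def shapeToPartition (x : ℕ × ℕ × ℕ × ℕ) (hx : x ∈ twoSizeShapes n) : n.Partition where
  parts := Multiset.replicate x.2.2.1 x.1 + Multiset.replicate x.2.2.2 x.2.1
  parts_pos := by
    obtain ⟨hb, hba, -⟩ := mem_twoSizeShapes.1 hx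
    intro y hy
    rcases Multiset.mem_add.1 hy with hy | hy <;> rw [Multiset.eq_of_mem_replicate hy] <;> omega
  parts_sum := by
    obtain ⟨-, -, -, -, hsum⟩ := mem_twoSizeShapes.1 hx
    simpa using hsum

theorem exists_shapeToPartition_eq {π : n.Partition} {u w : ℕ} (hwu : w < u)
    (hπ : π.parts.toFinset = {u, w}) :
    ∃ x, ∃ hx : x ∈ twoSizeShapes n, shapeToPartition x hx = π := by
  have hu : u ∈ π.parts := by rw [← Multiset.mem_toFinset, hπ]; simp
  have hw : w ∈ π.parts := by rw [← Multiset.mem_toFinset, hπ]; simp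
  have hparts : π.parts = Multiset.replicate (π.parts.count u) u
      + Multiset.replicate (π.parts.count w) w := by
    conv_lhs => rw [← Multiset.toFinset_sum_count_nsmul_eq π.parts]
    rw [hπ, Finset.sum_pair hwu.ne', Multiset.nsmul_singleton, Multiset.nsmul_singleton]
  have hsum := π.parts_sum
  rw [hparts] at hsum
  refine ⟨(u, w, π.parts.count u, π.parts.count w), mem_twoSizeShapes.2 ⟨π.parts_pos hw, hwu,
    Multiset.count_pos.2 hu, Multiset.count_pos.2 hw, by simpa using hsum⟩, ?_⟩
  exact Nat.Partition.ext hparts.symm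

theorem nu_two_eq_card_twoSizeShapes : nu 2 n = (twoSizeShapes n).card := by
  refine (Finset.card_bij shapeToPartition (fun x hx => ?_) ?_ ?_).symm
  · obtain ⟨a, b, i, j⟩ := x
    obtain ⟨-, hba, hi, hj, -⟩ := mem_twoSizeShapes.1 hx
    rw [Finset.mem_filter_univ]
    simp only [numPartSizes, shapeToPartition, Multiset.toFinset_add, Multiset.toFinset_replicate,
      if_neg hi.ne', if_neg hj.ne']
    exact Finset.card_pair hba.ne'
  · rintro ⟨a, b, i, j⟩ hx ⟨a', b', i', j'⟩ hx' h
    obtain ⟨-, hba, hi, hj, -⟩ := mem_twoSizeShapes.1 hx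
    obtain ⟨-, hb'a', hi', hj', -⟩ := mem_twoSizeShapes.1 hx'
    obtain ⟨rfl, rfl, rfl, rfl⟩ :=
      replicate_add_replicate_inj hba hb'a' hi hj hi' hj' (congrArg Nat.Partition.parts h)
    rfl
  · intro π hπ
    obtain ⟨u, w, huw, hπ⟩ := Finset.card_eq_two.1 (Finset.mem_filter.1 hπ).2
    rcases huw.lt_or_gt with hlt | hlt
    · exact exists_shapeToPartition_eq hlt (by rw [hπ, Finset.pair_comm])
    · exact exists_shapeToPartition_eq hlt hπ

end twoSizeShapes

/-- Transposing the Ferrers diagram of `a^i b^j` gives `(i+j)^b i^(a-b)`. -/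
def conjShape : ℕ × ℕ × ℕ × ℕ → ℕ × ℕ × ℕ × ℕ
  | (a, b, i, j) => (i + j, i, b, a - b)

section conjShape

variable {n : ℕ}

theorem conjShape_mem_twoSizeShapes {x : ℕ × ℕ × ℕ × ℕ} (hx : x ∈ twoSizeShapes n) :
    conjShape x ∈ twoSizeShapes n := by
  obtain ⟨a, b, i, j⟩ := x
  obtain ⟨hb, hba, hi, hj, hsum⟩ := mem_twoSizeShapes.1 hx
  obtain ⟨k, rfl⟩ : ∃ k, a = b + k := ⟨a - b, by omega⟩
  refine mem_twoSizeShapes.2 ⟨hi, by omega, hb, by omega, ?_⟩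
  rw [← hsum, Nat.add_sub_cancel_left]
  ring

theorem conjShape_conjShape {x : ℕ × ℕ × ℕ × ℕ} (hx : x ∈ twoSizeShapes n) :
    conjShape (conjShape x) = x := by
  obtain ⟨a, b, i, j⟩ := x
  obtain ⟨-, hba, -⟩ := mem_twoSizeShapes.1 hx
  simp only [conjShape]
  rw [Nat.add_sub_cancel' hba.le, Nat.add_sub_cancel_left]

theorem card_filter_conjShape_eq_self :
    ((twoSizeShapes n).filter fun x => conjShape x = x).card =
      (equalParityFactorizations n).card := by
  refine Finset.card_bij (fun x _ => s(x.2.1, x.1 + x.2.2.2)) (fun x hx => ?_) ?_ ?_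
  · obtain ⟨a, b, i, j⟩ := x
    obtain ⟨hx, hfix⟩ := Finset.mem_filter.1 hx
    obtain ⟨hb, hba, -, hj, hsum⟩ := mem_twoSizeShapes.1 hx
    simp only [conjShape, Prod.mk.injEq] at hfix
    obtain ⟨rfl, rfl, -, -⟩ := hfix
    dsimp only
    refine mem_equalParityFactorizations.2
      ⟨_, _, ?_, by rw [← hsum]; positivity, by omega, ?_, rfl⟩
    · rw [← hsum]; ring
    · unfold Nat.ModEq; omega
  · rintro ⟨a, b, i, j⟩ hx ⟨a', b', i', j'⟩ hx' h
    obtain ⟨hx, hfix⟩ := Finset.mem_filter.1 hx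
    obtain ⟨hx', hfix'⟩ := Finset.mem_filter.1 hx'
    obtain ⟨-, -, -, hj, -⟩ := mem_twoSizeShapes.1 hx
    simp only [conjShape, Prod.mk.injEq] at hfix hfix'
    simp only [Sym2.eq_iff, Prod.mk.injEq] at h ⊢
    omega
  · intro z hz
    obtain ⟨b, c, rfl, hn, hbc, hmod, rfl⟩ := mem_equalParityFactorizations.1 hz
    obtain ⟨k, rfl⟩ : ∃ k, c = b + 2 * k :=
      ⟨(c - b) / 2, by unfold Nat.ModEq at hmod; omega⟩
    have hb : 0 < b := Nat.pos_of_ne_zero (left_ne_zero_of_mul hn)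
    refine ⟨(b + k, b, b, k), Finset.mem_filter.2 ⟨mem_twoSizeShapes.2
      ⟨hb, by omega, hb, by omega, by ring⟩, ?_⟩, ?_⟩
    · simp [conjShape]
    · dsimp only; rw [two_mul, add_assoc]

end conjShape

theorem even_nu_two_of_odd_prime {n p q : ℕ} (hp : p.Prime) (hp_odd : Odd p)
    (hvp : Odd (n.factorization p)) (hqp : q ≠ p) (hvq : Odd (n.factorization q)) :
    Even (nu 2 n) := by
  rw [nu_two_eq_card_twoSizeShapes,
    Finset.even_card_iff_even_card_filter_fixed conjShape (fun _ => conjShape_mem_twoSizeShapes)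
      (fun _ => conjShape_conjShape),
    card_filter_conjShape_eq_self]
  exact even_card_equalParityFactorizations hp hp_odd hvp hqp hvq

theorem nu_two_even_of_two_odd_primes (n : ℕ)
    (h : 2 ≤ (n.primeFactors.filter (fun p => Odd (n.factorization p))).card) :
    2 ∣ nu 2 n := by
  obtain ⟨p, hp, q, hq, hpq⟩ := Finset.one_lt_card.1 h
  simp only [Finset.mem_filter, Nat.mem_primeFactors] at hp hq
  rw [← even_iff_two_dvd]
  rcases eq_or_ne p 2 with rfl | hp2
  · exact even_nu_two_of_odd_prime hq.1.1 (hq.1.1.odd_of_ne_two hpq.symm) hq.2 hpq hp.2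
  · exact even_nu_two_of_odd_prime hp.1.1 (hp.1.1.odd_of_ne_two hp2) hp.2 hpq.symm hq.2
end

section
/- For every nonnegative integer j, σ₁(36j+30) ≡ 0 (mod 8). -/
/-!
Write 36j + 30 = 2 · 3 · (6j + 5) with pairwise coprime factors. By multiplicativity,
σ₁(36j + 30) = 3 · 4 · σ₁(6j + 5). The number 6j + 5 is odd and, being ≡ 2 (mod 3), not a square,
so its divisors split into pairs {d, (6j + 5)/d} of two odd numbers; hence σ₁(6j + 5) is even.
-/

open ArithmeticFunction
open scoped ArithmeticFunction.sigma

theorem ArithmeticFunction.sigma_one_apply_prime {p : ℕ} (hp : p.Prime) : σ 1 p = p + 1 := by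
  simpa [add_comm] using sigma_one_apply_prime_pow (i := 1) hp

theorem Nat.not_isSquare_of_mod_three_eq_two {n : ℕ} (h : n % 3 = 2) : ¬ IsSquare n := by
  rintro ⟨r, rfl⟩
  have hr : r % 3 < 3 := Nat.mod_lt _ (by norm_num)
  interval_cases hr3 : r % 3 <;> simp [Nat.mul_mod, hr3] at h

theorem ArithmeticFunction.even_sigma_one_of_odd_of_not_isSquare {n : ℕ} (hn : Odd n)
    (hsq : ¬ IsSquare n) : Even (σ 1 n) := by
  have hn0 : n ≠ 0 := by rintro rfl; exact Nat.not_odd_zero hn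
  rw [← ZMod.natCast_eq_zero_iff_even, sigma_one_apply, Nat.cast_sum]
  refine Finset.sum_involution (fun d _ => n / d) ?_ ?_ ?_ ?_
  · intro d hd
    have hdn := Nat.dvd_of_mem_divisors hd
    rw [(hn.of_dvd_nat hdn).natCast_zmod_two,
      (hn.of_dvd_nat (Nat.div_dvd_of_dvd hdn)).natCast_zmod_two]
    decide
  · intro d hd _ hfix
    exact hsq ⟨d, by rw [← Nat.mul_div_cancel' (Nat.dvd_of_mem_divisors hd), hfix]⟩
  · intro d hd
    exact Nat.mem_divisors.mpr ⟨Nat.div_dvd_of_dvd (Nat.dvd_of_mem_divisors hd), hn0⟩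
  · intro d hd
    exact Nat.div_div_self (Nat.dvd_of_mem_divisors hd) hn0

theorem sigma_36j30_mod8 (j : ℕ) :
    ArithmeticFunction.sigma 1 (36 * j + 30) % 8 = 0 := by
  have hfactor : 36 * j + 30 = 2 * (3 * (6 * j + 5)) := by ring
  have hcop₂ : Nat.Coprime 2 (3 * (6 * j + 5)) := by
    rw [Nat.Prime.coprime_iff_not_dvd Nat.prime_two]; omega
  have hcop₃ : Nat.Coprime 3 (6 * j + 5) := by
    rw [Nat.Prime.coprime_iff_not_dvd Nat.prime_three]; omega
  obtain ⟨m, hm⟩ := even_sigma_one_of_odd_of_not_isSquare (n := 6 * j + 5)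
    (by rw [Nat.odd_iff]; omega) (Nat.not_isSquare_of_mod_three_eq_two (by omega))
  rw [hfactor, isMultiplicative_sigma.map_mul_of_coprime hcop₂,
    isMultiplicative_sigma.map_mul_of_coprime hcop₃, sigma_one_apply_prime Nat.prime_two,
    sigma_one_apply_prime Nat.prime_three, hm]
  omega
end

section
/- If n ≡ 30 (mod 36), then d(n) ≡ 0 (mod 8). -/
lemma even_card_divisors_of_not_square (m : ℕ) (hm : m ≠ 0) (h : ¬ IsSquare m) :
    2 ∣ m.divisors.card := by
  rw [Nat.card_divisors hm]
  by_contra hc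
  apply h
  have hall : ∀ p ∈ m.primeFactors, Even (m.factorization p) := by
    intro p hp
    by_contra hodd
    obtain ⟨t, ht⟩ := Nat.not_even_iff_odd.mp hodd
    have h2 : 2 ∣ m.factorization p + 1 := by omega
    exact hc (h2.trans (Finset.dvd_prod_of_mem _ hp))
  have hm2 : ∏ p ∈ m.primeFactors, p ^ m.factorization p = m := by
    rw [← Nat.support_factorization]
    exact Nat.factorization_prod_pow_eq_self hm
  refine ⟨∏ p ∈ m.primeFactors, p ^ (m.factorization p / 2), ?_⟩
  rw [← Finset.prod_mul_distrib]
  conv_lhs => rw [← hm2]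
  apply Finset.prod_congr rfl
  intro p hp
  rw [← pow_add]
  congr 1
  obtain ⟨t, ht⟩ := hall p hp
  omega

theorem d_mod8_of_30_mod36 (n : ℕ) (h : n % 36 = 30) :
    8 ∣ n.divisors.card := by
  obtain ⟨k, hk⟩ : ∃ k, n = 36 * k + 30 := ⟨n / 36, by omega⟩
  set m : ℕ := 6 * k + 5 with hm
  have hn : n = 2 * (3 * m) := by omega
  have hc1 : Nat.Coprime 2 (3 * m) := by
    rw [Nat.Prime.coprime_iff_not_dvd Nat.prime_two]
    rintro ⟨c, hc⟩
    omega
  have hc2 : Nat.Coprime 3 m := by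
    rw [Nat.Prime.coprime_iff_not_dvd Nat.prime_three]
    rintro ⟨c, hc⟩
    omega
  have hns : ¬ IsSquare m := by
    rintro ⟨r, hr⟩
    have h5 : m % 6 = 5 := by omega
    have hmm : (r % 6) * (r % 6) % 6 = 5 := by
      rw [← Nat.mul_mod]; omega
    have hlt : r % 6 < 6 := Nat.mod_lt _ (by norm_num)
    interval_cases hq : r % 6 <;> simp_all
  rw [hn, hc1.card_divisors_mul, hc2.card_divisors_mul]
  obtain ⟨c, hc⟩ := even_card_divisors_of_not_square m (by omega) hns
  rw [hc]
  have h2 : (Nat.divisors 2).card = 2 := by decide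
  have h3 : (Nat.divisors 3).card = 2 := by decide
  rw [h2, h3]
  exact ⟨c, by ring⟩
end

section
/- For every nonnegative integer j, d(36j+30) ≡ −σ₂(36j+30) (mod 12). -/
open ArithmeticFunction Finset

lemma unit_sq : ∀ u : (ZMod 12)ˣ, u * u = 1 := by decide

lemma sq_one_of_coprime {e : ℕ} (h : Nat.Coprime e 12) :
    (e : ZMod 12) * (e : ZMod 12) = 1 := by
  have := congrArg (Units.val) (unit_sq (ZMod.unitOfCoprime e h))
  simpa [ZMod.coe_unitOfCoprime] using this

lemma even_card_divisors (j : ℕ) : Even (6 * j + 5 : ℕ).divisors.card := by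
  set m := 6 * j + 5 with hm
  have hm0 : m ≠ 0 := by omega
  rw [Nat.even_iff, ← Nat.dvd_iff_mod_eq_zero,
    ← ZMod.natCast_eq_zero_iff m.divisors.card 2]
  rw [Finset.card_eq_sum_ones, Nat.cast_sum]
  refine Finset.sum_involution (fun a _ => m / a) (fun a ha => by decide)
    (fun a ha _ hfix => ?_) (fun a ha => ?_) (fun a ha => ?_)
  · have had : a ∣ m := (Nat.mem_divisors.mp ha).1
    have hsq : m = a * a := Nat.eq_mul_of_div_eq_right had hfix
    have h6 : m % 6 = 5 := by omega
    have := Nat.mul_mod a a 6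
    have hlt : a % 6 < 6 := Nat.mod_lt _ (by norm_num)
    interval_cases h : a % 6 <;> omega
  · exact Nat.mem_divisors.mpr ⟨Nat.div_dvd_of_dvd (Nat.mem_divisors.mp ha).1, hm0⟩
  · exact Nat.div_div_self (Nat.mem_divisors.mp ha).1 hm0

lemma sigma2_cast (j : ℕ) :
    ((ArithmeticFunction.sigma 2 (6 * j + 5) : ℕ) : ZMod 12)
      = ((6 * j + 5 : ℕ).divisors.card : ZMod 12) := by
  set m := 6 * j + 5 with hm
  have hcop : Nat.Coprime 6 m := by
    have : Nat.Coprime 6 (5 + 6 * j) := (Nat.coprime_add_mul_left_right 6 5 j).mpr (by decide)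
    simpa [hm, Nat.add_comm] using this
  rw [ArithmeticFunction.sigma_apply, Nat.cast_sum, Finset.card_eq_sum_ones, Nat.cast_sum]
  refine Finset.sum_congr rfl fun e he => ?_
  have hed : e ∣ m := (Nat.mem_divisors.mp he).1
  have h6 : Nat.Coprime e 6 := (hcop.coprime_dvd_right hed).symm
  have h2 : Nat.Coprime e 2 := h6.coprime_dvd_right (by norm_num)
  have h12 : Nat.Coprime e 12 := by
    have := h2.mul_right h6
    norm_num at this
    exact this
  push_cast
  rw [sq]
  rw [sq_one_of_coprime h12]

theorem d_eq_neg_sigma2_mod12 (j : ℕ) :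
    ((36 * j + 30 : ℕ).divisors.card : ℤ) ≡
      -(ArithmeticFunction.sigma 2 (36 * j + 30) : ℤ) [ZMOD 12] := by
  have hn : 36 * j + 30 = 6 * (6 * j + 5) := by ring
  have hcop : Nat.Coprime 6 (6 * j + 5) := by
    have : Nat.Coprime 6 (5 + 6 * j) := (Nat.coprime_add_mul_left_right 6 5 j).mpr (by decide)
    simpa [Nat.add_comm] using this
  refine (ZMod.intCast_eq_intCast_iff _ _ 12).mp ?_
  push_cast
  rw [hn, hcop.card_divisors_mul, isMultiplicative_sigma.map_mul_of_coprime hcop]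
  have hd6 : (Nat.divisors 6).card = 4 := by decide
  have hs6 : (ArithmeticFunction.sigma 2 6 : ℕ) = 50 := by decide
  rw [hd6, hs6]
  push_cast
  rw [sigma2_cast j]
  obtain ⟨k, hk⟩ := even_card_divisors j
  rw [hk]
  push_cast
  have h108 : (108 : ZMod 12) = 0 := by decide
  linear_combination (k : ZMod 12) * h108
end

section
/- For a positive integer k, d(k) ≡ 2 (mod 4) if and only if k = p·y² for some prime p and positive integer y with the p-adic valuation of y even. -/
lemma odd_prod_aux {S : Finset ℕ} {f : ℕ → ℕ} (h : ∀ q ∈ S, Odd (f q)) :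
    Odd (∏ q ∈ S, f q) :=
  Finset.prod_induction f Odd (fun _ _ => Odd.mul) odd_one h

lemma exists_sq_of_even_fac {m : ℕ} (hm : m ≠ 0) (h : ∀ q, Even (m.factorization q)) :
    ∃ y, 0 < y ∧ m = y ^ 2 := by
  refine ⟨∏ q ∈ m.primeFactors, q ^ (m.factorization q / 2), ?_, ?_⟩
  · exact Finset.prod_pos fun q hq =>
      pow_pos (Nat.prime_of_mem_primeFactors hq).pos _
  · rw [← Finset.prod_pow]
    have : ∀ q ∈ m.primeFactors, (q ^ (m.factorization q / 2)) ^ 2 = q ^ m.factorization q := by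
      intro q hq
      rw [← pow_mul]
      congr 1
      obtain ⟨c, hc⟩ := h q
      omega
    rw [Finset.prod_congr rfl this]
    exact (Nat.factorization_prod_pow_eq_self hm).symm

theorem d_two_mod_four_iff (k : ℕ) (hk : 0 < k) :
    k.divisors.card % 4 = 2 ↔
      ∃ (p y : ℕ), p.Prime ∧ 0 < y ∧ k = p * y ^ 2 ∧ Even (y.factorization p) := by
  have hk0 : k ≠ 0 := hk.ne'
  rw [Nat.card_divisors hk0]
  constructor
  · intro h
    have h2 : 2 ∣ k.primeFactors.prod (k.factorization · + 1) := by omega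
    obtain ⟨p, hpS, hp2⟩ := (Nat.prime_two.prime.dvd_finset_prod_iff _).mp h2
    have hpp : p.Prime := Nat.prime_of_mem_primeFactors hpS
    have hodd : Odd (k.factorization p) := by
      rcases Nat.even_or_odd (k.factorization p) with he | ho
      · exfalso; obtain ⟨c, hc⟩ := he; omega
      · exact ho
    obtain ⟨a, ha⟩ := hodd
    have heven : ∀ q ∈ k.primeFactors.erase p, Even (k.factorization q) := by
      intro q hq
      by_contra hoddq
      rw [Nat.not_even_iff_odd] at hoddq
      obtain ⟨b, hb⟩ := hoddq
      have e1 : k.primeFactors.prod (k.factorization · + 1)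
          = (k.factorization p + 1) * ∏ r ∈ k.primeFactors.erase p, (k.factorization r + 1) :=
        (Finset.mul_prod_erase _ _ hpS).symm
      have e2 : ∏ r ∈ k.primeFactors.erase p, (k.factorization r + 1)
          = (k.factorization q + 1) *
            ∏ r ∈ (k.primeFactors.erase p).erase q, (k.factorization r + 1) :=
        (Finset.mul_prod_erase _ _ hq).symm
      set R := ∏ r ∈ (k.primeFactors.erase p).erase q, (k.factorization r + 1) with hR
      rw [e1, e2, ha, hb] at h
      have : (2 * a + 1 + 1) * ((2 * b + 1 + 1) * R) = 4 * ((a + 1) * ((b + 1) * R)) := by ring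
      omega
    have e1 : k.primeFactors.prod (k.factorization · + 1)
        = (k.factorization p + 1) * ∏ r ∈ k.primeFactors.erase p, (k.factorization r + 1) :=
      (Finset.mul_prod_erase _ _ hpS).symm
    have hRodd : Odd (∏ r ∈ k.primeFactors.erase p, (k.factorization r + 1)) := by
      apply odd_prod_aux
      intro q hq
      obtain ⟨c, hc⟩ := heven q hq
      exact ⟨c, by omega⟩
    obtain ⟨r, hr⟩ := hRodd
    have haeven : Even a := by
      by_contra haodd
      rw [Nat.not_even_iff_odd] at haodd
      obtain ⟨b, hb⟩ := haodd
      rw [e1, ha, hr, hb] at h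
      have : (2 * (2 * b + 1) + 1 + 1) * (2 * r + 1) = 4 * ((b + 1) * (2 * r + 1)) := by ring
      omega
    have hpd : p ∣ k := Nat.dvd_of_mem_primeFactors hpS
    have hkm : k = p * (k / p) := (Nat.mul_div_cancel' hpd).symm
    have hm0 : k / p ≠ 0 := by
      intro h0
      rw [h0, mul_zero] at hkm
      exact hk0 hkm
    have hfac : ∀ q, (k / p).factorization q
        = k.factorization q - (if q = p then 1 else 0) := by
      intro q
      rw [Nat.factorization_div hpd, Finsupp.tsub_apply, hpp.factorization,
        Finsupp.single_apply]
      simp [eq_comm]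
    have hallev : ∀ q, Even ((k / p).factorization q) := by
      intro q
      rw [hfac q]
      by_cases hqp : q = p
      · subst hqp
        simp only [eq_self_iff_true, if_true, ha]
        exact ⟨a, by omega⟩
      · simp [hqp]
        by_cases hqS : q ∈ k.primeFactors
        · exact heven q (Finset.mem_erase.mpr ⟨hqp, hqS⟩)
        · rw [Finsupp.notMem_support_iff.mp (by rwa [Nat.support_factorization])]
          exact Even.zero
    obtain ⟨y, hy, hym⟩ := exists_sq_of_even_fac hm0 hallev
    refine ⟨p, y, hpp, hy, by rw [hkm, hym], ?_⟩
    have h2v : 2 * y.factorization p = (k / p).factorization p := by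
      rw [hym, Nat.factorization_pow]
      simp
    rw [hfac p] at h2v
    simp [ha] at h2v
    obtain ⟨c, hc⟩ := haeven
    exact ⟨c, by omega⟩
  · rintro ⟨p, y, hpp, hy, rfl, hev⟩
    have hy0 : y ≠ 0 := hy.ne'
    have hy2 : y ^ 2 ≠ 0 := pow_ne_zero 2 hy0
    have hfac : ∀ q, (p * y ^ 2).factorization q
        = (if q = p then 1 else 0) + 2 * y.factorization q := by
      intro q
      rw [Nat.factorization_mul hpp.ne_zero hy2, Finsupp.add_apply, Nat.factorization_pow,
        hpp.factorization, Finsupp.single_apply, Finsupp.smul_apply]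
      rcases eq_or_ne q p with hq | hq
      · simp [hq, two_mul, mul_comm]
      · simp [hq, Ne.symm hq, two_mul, mul_comm]
    have hpS : p ∈ (p * y ^ 2).primeFactors := by
      rw [Nat.mem_primeFactors]
      exact ⟨hpp, Dvd.intro _ rfl, hk0⟩
    have e1 : (p * y ^ 2).primeFactors.prod ((p * y ^ 2).factorization · + 1)
        = ((p * y ^ 2).factorization p + 1) *
          ∏ r ∈ (p * y ^ 2).primeFactors.erase p, ((p * y ^ 2).factorization r + 1) :=
      (Finset.mul_prod_erase _ _ hpS).symm
    have hRodd : Odd (∏ r ∈ (p * y ^ 2).primeFactors.erase p,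
        ((p * y ^ 2).factorization r + 1)) := by
      apply odd_prod_aux
      intro q hq
      have hqp : q ≠ p := Finset.ne_of_mem_erase hq
      rw [hfac q]
      simp only [if_neg hqp, zero_add]
      exact ⟨y.factorization q, by ring⟩
    obtain ⟨r, hr⟩ := hRodd
    obtain ⟨c, hc⟩ := hev
    rw [e1, hr, hfac p]
    simp only [eq_self_iff_true, if_true]
    rw [hc]
    have : (1 + 2 * (c + c) + 1) * (2 * r + 1) = 4 * (2 * c * r + c + r) + 2 := by ring
    omega
end
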